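/- Let g : ℕ → ℝ be a nonnegative function such that c := lim_{n→∞} g(n) exists and c > 0, set p(n) := n^{−g(n)}, and let s₀ := 2⌈4/c⌉ + 1. Then there exists N ∈ ℕ such that for all n ≥ N, the expected total number of cliques of size at least 2 in the Erdős–Rényi random graph G(n,p(n)), i.e. E[Σ_{s=2}^{n} K_s(G(n,p(n)))], is at most n^{s₀+1}. -/

import Mathlib

open MeasureTheory
open scoped Classical

noncomputable def bernoulliMeasure (p : ℝ) : Measure Bool :=
  (PMF.bernoulli (min (Real.toNNReal p) 1) (min_le_right _ _)).toMeasure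

noncomputable def erdosRenyi (n : ℕ) (p : ℝ) : Measure (Sym2 (Fin n) → Bool) :=
  Measure.pi fun _ => bernoulliMeasure p

def IsCompleteOn {n : ℕ} (ω : Sym2 (Fin n) → Bool) (S : Finset (Fin n)) : Prop :=
  ∀ u ∈ S, ∀ v ∈ S, u ≠ v → ω s(u, v) = true

noncomputable def cliqueCount (n s : ℕ) (ω : Sym2 (Fin n) → Bool) : ℕ :=
  (Finset.univ.filter fun S : Finset (Fin n) => S.card = s ∧ IsCompleteOn ω S).card

/-!
By linearity of expectation, `E[K_s] = C(n, s) p^{C(s, 2)} ≤ (n p^{(s-1)/2})^s`.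
Once `g n ≥ c/2` and `s > m := ⌈4/c⌉`, the base `n^{1 - g(n)(s-1)/2}` is at most `1`;
for `s ≤ m` the term is at most `n^s`. So each of the fewer than `n` terms is at most
`n^m ≤ n^{s₀}`.
-/

open Finset

instance bernoulliMeasure.instIsProbabilityMeasure (p : ℝ) :
    IsProbabilityMeasure (bernoulliMeasure p) :=
  PMF.toMeasure.isProbabilityMeasure _

lemma bernoulliMeasure_singleton_true (p : ℝ) :
    bernoulliMeasure p {true} = min (ENNReal.ofReal p) 1 := by
  rw [bernoulliMeasure, PMF.toMeasure_apply_singleton _ _ (measurableSet_singleton _)]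
  change ((min (Real.toNNReal p) 1 : NNReal) : ENNReal) = _
  rw [ENNReal.coe_min, ENNReal.coe_one]
  rfl

instance erdosRenyi.instIsProbabilityMeasure (n : ℕ) (p : ℝ) :
    IsProbabilityMeasure (erdosRenyi n p) := by
  unfold erdosRenyi; infer_instance

section Cliques

variable {n : ℕ}

lemma setOf_isCompleteOn_eq_pi (S : Finset (Fin n)) :
    {ω : Sym2 (Fin n) → Bool | IsCompleteOn ω S} =
      Set.pi ↑(S.offDiag.image Sym2.mk.uncurry) fun _ => {true} := by
  ext ω
  simp only [Set.mem_ofPred_eq, Set.mem_pi, coe_image, Set.mem_image, mem_coe, mem_offDiag,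
    Set.mem_singleton_iff, IsCompleteOn]
  constructor
  · rintro h e ⟨⟨u, v⟩, ⟨hu, hv, huv⟩, rfl⟩
    exact h u hu v hv huv
  · exact fun h u hu v hv huv => h _ ⟨(u, v), ⟨hu, hv, huv⟩, rfl⟩

lemma measurableSet_setOf_isCompleteOn (S : Finset (Fin n)) :
    MeasurableSet {ω : Sym2 (Fin n) → Bool | IsCompleteOn ω S} := by
  rw [setOf_isCompleteOn_eq_pi]
  exact .pi (Set.to_countable _) fun _ _ => measurableSet_singleton true

lemma erdosRenyi_setOf_isCompleteOn (p : ℝ) (S : Finset (Fin n)) :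
    erdosRenyi n p {ω | IsCompleteOn ω S} = min (ENNReal.ofReal p) 1 ^ S.card.choose 2 := by
  rw [setOf_isCompleteOn_eq_pi, ← Set.univ_pi_ite, erdosRenyi, Measure.pi_pi]
  simp only [apply_ite (bernoulliMeasure p), measure_univ, bernoulliMeasure_singleton_true,
    mem_coe]
  rw [prod_ite_mem, univ_inter, prod_const, Sym2.card_image_offDiag]

lemma cliqueCount_eq_sum_indicator (s : ℕ) (ω : Sym2 (Fin n) → Bool) :
    (cliqueCount n s ω : ℝ) =
      ∑ S ∈ powersetCard s univ, {ω' | IsCompleteOn ω' S}.indicator 1 ω := by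
  have h : univ.filter (fun S : Finset (Fin n) => S.card = s ∧ IsCompleteOn ω S) =
      (powersetCard s univ).filter (IsCompleteOn ω) := by
    ext S
    simp [mem_powersetCard, and_comm]
  rw [cliqueCount, h, card_filter]
  push_cast
  refine sum_congr rfl fun S _ => ?_
  by_cases hS : IsCompleteOn ω S <;> simp [hS]

lemma integrable_cliqueCount (s : ℕ) (p : ℝ) :
    Integrable (fun ω => (cliqueCount n s ω : ℝ)) (erdosRenyi n p) := by
  simp_rw [cliqueCount_eq_sum_indicator s]
  exact integrable_finsetSum _ fun S _ =>
    (integrable_const 1).indicator (measurableSet_setOf_isCompleteOn S)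

lemma integral_cliqueCount (s : ℕ) {p : ℝ} (hp₀ : 0 ≤ p) (hp₁ : p ≤ 1) :
    ∫ ω, (cliqueCount n s ω : ℝ) ∂erdosRenyi n p = n.choose s * p ^ s.choose 2 := by
  simp_rw [cliqueCount_eq_sum_indicator s]
  rw [integral_finsetSum _ fun S _ =>
    (integrable_const 1).indicator (measurableSet_setOf_isCompleteOn S)]
  have hS : ∀ S ∈ powersetCard s (univ : Finset (Fin n)),
      ∫ ω, {ω' | IsCompleteOn ω' S}.indicator 1 ω ∂erdosRenyi n p = p ^ s.choose 2 := by
    intro S hS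
    rw [integral_indicator_one (measurableSet_setOf_isCompleteOn S), measureReal_def,
      erdosRenyi_setOf_isCompleteOn, (mem_powersetCard.mp hS).2,
      min_eq_left (ENNReal.ofReal_le_one.mpr hp₁), ← ENNReal.ofReal_pow hp₀,
      ENNReal.toReal_ofReal (pow_nonneg hp₀ _)]
  rw [sum_congr rfl hS, sum_const, card_powersetCard, card_univ, Fintype.card_fin, nsmul_eq_mul]

end Cliques

lemma pow_mul_rpow_neg_pow_choose_two_le {x γ : ℝ} (hx : 1 ≤ x) {m : ℕ} (hγ : 2 ≤ γ * m)
    (s : ℕ) : x ^ s * (x ^ (-γ)) ^ s.choose 2 ≤ x ^ m := by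
  have hγ₀ : 0 < γ := by
    by_contra! h
    nlinarith [(Nat.cast_nonneg m : (0 : ℝ) ≤ m)]
  rcases le_or_gt s m with hsm | hms
  · calc x ^ s * (x ^ (-γ)) ^ s.choose 2 ≤ x ^ s * 1 := by
          gcongr
          exact pow_le_one₀ (by positivity)
            (Real.rpow_le_one_of_one_le_of_nonpos hx (by linarith))
      _ ≤ x ^ m := by rw [mul_one]; exact pow_le_pow_right₀ hx hsm
  · have hm : (m : ℝ) + 1 ≤ s := by exact_mod_cast hms
    have hexp : (s : ℝ) + -γ * (s.choose 2 : ℝ) ≤ 0 := by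
      have h : 2 ≤ γ * (s - 1) := by nlinarith
      rw [Nat.cast_choose_two]
      nlinarith [mul_le_mul_of_nonneg_left h (Nat.cast_nonneg s : (0 : ℝ) ≤ s)]
    calc x ^ s * (x ^ (-γ)) ^ s.choose 2 = x ^ ((s : ℝ) + -γ * (s.choose 2 : ℝ)) := by
          rw [Real.rpow_add (by positivity), Real.rpow_natCast,
            ← Real.rpow_natCast (x ^ (-γ)), ← Real.rpow_mul (by positivity)]
      _ ≤ x ^ (0 : ℝ) := Real.rpow_le_rpow_of_exponent_le hx hexp
      _ ≤ x ^ m := by rw [Real.rpow_zero]; exact one_le_pow₀ hx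

lemma choose_mul_rpow_neg_pow_choose_two_le {n : ℕ} (hn : 1 ≤ n) {γ : ℝ} {m : ℕ}
    (hγ : 2 ≤ γ * m) (s : ℕ) : n.choose s * ((n : ℝ) ^ (-γ)) ^ s.choose 2 ≤ (n : ℝ) ^ m := by
  have hn' : (1 : ℝ) ≤ n := by exact_mod_cast hn
  calc n.choose s * ((n : ℝ) ^ (-γ)) ^ s.choose 2
      ≤ (n : ℝ) ^ s * ((n : ℝ) ^ (-γ)) ^ s.choose 2 := by
        gcongr
        exact_mod_cast Nat.choose_le_pow n s
    _ ≤ (n : ℝ) ^ m := pow_mul_rpow_neg_pow_choose_two_le hn' hγ s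

theorem erdosRenyi_expected_total_cliqueCount_le_general
    (c : ℝ) (hc : 0 < c) (g : ℕ → ℝ)
    (hlim : Filter.Tendsto g Filter.atTop (nhds c))
    (s₀ : ℕ) (hs₀ : s₀ = 2 * ⌈(4 : ℝ) / c⌉₊ + 1) :
    ∃ N : ℕ, ∀ n ≥ N,
      ∫ ω, (∑ s ∈ Finset.Icc 2 n, (cliqueCount n s ω : ℝ))
          ∂ erdosRenyi n ((n : ℝ) ^ (-(g n))) ≤
        (n : ℝ) ^ (s₀ + 1) := by
  obtain ⟨N, hN⟩ := Filter.eventually_atTop.mp (hlim.eventually_const_le (half_lt_self hc))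
  refine ⟨max N 1, fun n hn => ?_⟩
  have hn₁ : 1 ≤ n := le_of_max_le_right hn
  have hgn : c / 2 ≤ g n := hN n (le_of_max_le_left hn)
  have hγ : 2 ≤ g n * (⌈(4 : ℝ) / c⌉₊ : ℝ) := calc
    (2 : ℝ) = c / 2 * (4 / c) := by field_simp; norm_num
    _ ≤ g n * (⌈(4 : ℝ) / c⌉₊ : ℝ) := by
        gcongr
        · linarith
        · exact Nat.le_ceil _
  have hp₀ : 0 ≤ (n : ℝ) ^ (-g n) := by positivity
  have hp₁ : (n : ℝ) ^ (-g n) ≤ 1 :=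
    Real.rpow_le_one_of_one_le_of_nonpos (by exact_mod_cast hn₁) (by linarith)
  rw [integral_finsetSum _ fun s _ => integrable_cliqueCount s _]
  calc ∑ s ∈ Icc 2 n, ∫ ω, (cliqueCount n s ω : ℝ) ∂erdosRenyi n ((n : ℝ) ^ (-g n))
      = ∑ s ∈ Icc 2 n, n.choose s * ((n : ℝ) ^ (-g n)) ^ s.choose 2 :=
        sum_congr rfl fun s _ => integral_cliqueCount s hp₀ hp₁
    _ ≤ ∑ s ∈ Icc 2 n, (n : ℝ) ^ s₀ := sum_le_sum fun s _ =>
        (choose_mul_rpow_neg_pow_choose_two_le hn₁ hγ s).trans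
          (pow_le_pow_right₀ (by exact_mod_cast hn₁) (by omega))
    _ ≤ n * (n : ℝ) ^ s₀ := by
        rw [sum_const, nsmul_eq_mul, Nat.card_Icc]
        gcongr
        exact_mod_cast (by omega : n + 1 - 2 ≤ n)
    _ = (n : ℝ) ^ (s₀ + 1) := by rw [pow_succ, mul_comm]

/-- If `g ≥ 0` with `lim g = c > 0`, `p(n) = n^{−g(n)}`, and
`s₀ := 2⌈4/c⌉ + 1`, then for all sufficiently large `n`, the expected total number of
cliques of size at least `2` in `G(n, p(n))` is at most `n^{s₀+1}`. -/
theorem erdosRenyi_expected_total_cliqueCount_le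
    (c : ℝ) (hc : 0 < c) (g : ℕ → ℝ) (hg : ∀ m, 0 ≤ g m)
    (hlim : Filter.Tendsto g Filter.atTop (nhds c))
    (s₀ : ℕ) (hs₀ : s₀ = 2 * ⌈(4 : ℝ) / c⌉₊ + 1) :
    ∃ N : ℕ, ∀ n ≥ N,
      ∫ ω, (∑ s ∈ Finset.Icc 2 n, (cliqueCount n s ω : ℝ))
          ∂ erdosRenyi n ((n : ℝ) ^ (-(g n))) ≤
        (n : ℝ) ^ (s₀ + 1) :=
  erdosRenyi_expected_total_cliqueCount_le_general c hc g hlim s₀ hs₀
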